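/- For any real x, Q ≥ 1 and any real sequence (a_n)_{n ≤ x}, Σ_{Q/2 < q ≤ Q} Σ_{h | q} (1/φ(q/h)) Σ_{n ≤ x, (n,q)=h} a_n² ≪ Σ_{n ≤ x} a_n² τ(n), with an absolute implied constant. -/
import Mathlib


open scoped Classical

/-- `τ(n)`: the number of divisors of `n`. -/
def tau (n : ℕ) : ℕ := n.divisors.card

open Finset

lemma basel' : ∀ N : ℕ, 0 < N → ∑ a ∈ Ioc 0 N, (1:ℝ)/(a:ℝ)^2 ≤ 2 - 1/N := by
  intro N
  induction N with
  | zero => simp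
  | succ n ih =>
    intro _
    rw [Finset.sum_Ioc_succ_top (Nat.zero_le _)]
    rcases Nat.eq_zero_or_pos n with h | h
    · subst h; norm_num
    · have := ih h
      have h1 : (0:ℝ) < n := by positivity
      have h2 : (0:ℝ) < (n:ℝ)+1 := by positivity
      have key : (1:ℝ)/((n:ℕ)+1:ℝ)^2 ≤ 1/n - 1/((n:ℝ)+1) := by
        rw [div_sub_div _ _ (ne_of_gt h1) (ne_of_gt h2)]
        rw [div_le_div_iff₀ (by positivity) (by positivity)]
        nlinarith
      push_cast
      linarith

lemma basel (N : ℕ) : ∑ a ∈ Ioc 0 N, (1:ℝ)/(a:ℝ)^2 ≤ 2 := by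
  rcases Nat.eq_zero_or_pos N with h | h
  · simp [h]
  · have h1 := basel' N h
    have h2 : (0:ℝ) ≤ 1/N := by positivity
    linarith

lemma divisors_eq_filter {N d : ℕ} (hd : d ∈ Ioc 0 N) :
    d.divisors = (Ioc 0 N).filter (· ∣ d) := by
  rw [mem_Ioc] at hd
  ext e
  simp only [Nat.mem_divisors, mem_filter, mem_Ioc]
  constructor
  · rintro ⟨he, -⟩
    exact ⟨⟨Nat.pos_of_dvd_of_pos he hd.1, le_trans (Nat.le_of_dvd hd.1 he) hd.2⟩, he⟩
  · rintro ⟨-, he⟩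
    exact ⟨he, by omega⟩

lemma swap_div (N : ℕ) (F : ℕ → ℕ → ℝ) :
    ∑ d ∈ Ioc 0 N, ∑ e ∈ d.divisors, F d e
      = ∑ e ∈ Ioc 0 N, ∑ d ∈ (Ioc 0 N).filter (e ∣ ·), F d e := by
  have : ∀ d ∈ Ioc 0 N, ∑ e ∈ d.divisors, F d e
      = ∑ e ∈ Ioc 0 N, if e ∣ d then F d e else 0 := by
    intro d hd
    rw [divisors_eq_filter hd, sum_filter]
  rw [Finset.sum_congr rfl this, Finset.sum_comm]
  refine Finset.sum_congr rfl fun e _ => ?_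
  rw [sum_filter]

-- d ≤ τ(d) * φ(d)
lemma le_tau_mul_totient (d : ℕ) : d ≤ tau d * d.totient := by
  conv_lhs => rw [← Nat.sum_totient d]
  rw [tau, card_eq_sum_ones, sum_mul, one_mul]
  refine Finset.sum_le_sum fun e he => ?_
  rcases Nat.eq_zero_or_pos d with h | h
  · simp [h] at he
  · exact Nat.le_of_dvd (Nat.totient_pos.2 h) (Nat.totient_dvd_of_dvd (Nat.mem_divisors.1 he).1)

lemma inv_totient_le {d : ℕ} (hd : 0 < d) :
    (1:ℝ) / (d.totient : ℝ) ≤ (tau d : ℝ) / d := by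
  have h1 : (0:ℝ) < d.totient := by exact_mod_cast Nat.totient_pos.2 hd
  rw [div_le_div_iff₀ h1 (by positivity)]
  have h2 : (d:ℝ) ≤ (tau d : ℝ) * (d.totient : ℝ) := by exact_mod_cast le_tau_mul_totient d
  nlinarith [h2]

-- m / φ(m) ≤ ∑_{d | m} 1/φ(d)
lemma ratio_le_sum {m : ℕ} (hm : 0 < m) :
    (m:ℝ) / (m.totient : ℝ) ≤ ∑ d ∈ m.divisors, (1:ℝ) / (d.totient : ℝ) := by
  have hφ : (0:ℝ) < m.totient := by exact_mod_cast Nat.totient_pos.2 hm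
  rw [div_le_iff₀ hφ]
  calc (m:ℝ) = ∑ d ∈ m.divisors, (d.totient : ℝ) := by
        rw_mod_cast [Nat.sum_totient m]
    _ ≤ ∑ d ∈ m.divisors, (m.totient : ℝ) / ((m/d).totient : ℝ) := by
        refine Finset.sum_le_sum fun d hd => ?_
        have hdvd := (Nat.mem_divisors.1 hd).1
        have hmd : 0 < m / d := Nat.div_pos (Nat.le_of_dvd hm hdvd)
          (Nat.pos_of_dvd_of_pos hdvd hm)
        have h2 : (0:ℝ) < (m/d).totient := by exact_mod_cast Nat.totient_pos.2 hmd
        rw [le_div_iff₀ h2]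
        have := Nat.totient_super_multiplicative d (m/d)
        rw [Nat.mul_div_cancel' hdvd] at this
        exact_mod_cast this
    _ = ∑ d ∈ m.divisors, (1:ℝ) / ((m/d).totient : ℝ) * m.totient := by
        refine Finset.sum_congr rfl fun d _ => ?_; ring
    _ = (∑ d ∈ m.divisors, (1:ℝ) / (d.totient : ℝ)) * m.totient := by
        rw [← Finset.sum_mul, Nat.sum_div_divisors m (fun d => (1:ℝ)/(d.totient:ℝ))]

lemma filter_mul_image (N e : ℕ) (he : 0 < e) :
    (Ioc 0 N).filter (e ∣ ·) = (Ioc 0 (N/e)).image (e * ·) := by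
  ext d
  simp only [mem_filter, mem_Ioc, mem_image]
  constructor
  · rintro ⟨⟨hd0, hdN⟩, f, rfl⟩
    have hf0 : 0 < f := by by_contra h; push_neg at h; interval_cases f; omega
    exact ⟨f, ⟨hf0, Nat.le_div_iff_mul_le he |>.2 (by rw [Nat.mul_comm]; exact hdN)⟩, rfl⟩
  · rintro ⟨f, ⟨hf0, hfN⟩, rfl⟩
    refine ⟨⟨Nat.mul_pos he hf0, ?_⟩, ⟨f, rfl⟩⟩
    calc e * f ≤ e * (N/e) := Nat.mul_le_mul_left e hfN
      _ ≤ N := Nat.mul_div_le N e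

lemma tau_sum_le (N : ℕ) : ∑ d ∈ Ioc 0 N, (tau d : ℝ) / (d:ℝ)^2 ≤ 4 := by
  have h1 : ∑ d ∈ Ioc 0 N, (tau d : ℝ) / (d:ℝ)^2
      = ∑ d ∈ Ioc 0 N, ∑ _e ∈ d.divisors, (1:ℝ)/(d:ℝ)^2 := by
    refine Finset.sum_congr rfl fun d _ => ?_
    rw [Finset.sum_const, tau, nsmul_eq_mul]
    ring
  rw [h1, swap_div N (fun d _ => (1:ℝ)/(d:ℝ)^2)]
  have h2 : ∀ e ∈ Ioc 0 N, ∑ d ∈ (Ioc 0 N).filter (e ∣ ·), (1:ℝ)/(d:ℝ)^2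
      ≤ (1:ℝ)/(e:ℝ)^2 * 2 := by
    intro e he
    rw [mem_Ioc] at he
    rw [filter_mul_image N e he.1,
      Finset.sum_image (by intro a _ b _ h; exact Nat.eq_of_mul_eq_mul_left he.1 h)]
    have : ∀ f ∈ Ioc 0 (N/e), (1:ℝ)/((e*f:ℕ):ℝ)^2 = (1:ℝ)/(e:ℝ)^2 * ((1:ℝ)/(f:ℝ)^2) := by
      intro f hf
      push_cast
      rw [mul_pow, one_div, one_div, one_div, mul_inv]
    rw [Finset.sum_congr rfl this, ← Finset.mul_sum]
    have hpos : (0:ℝ) ≤ 1/(e:ℝ)^2 := by positivity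
    nlinarith [basel (N/e)]
  calc ∑ e ∈ Ioc 0 N, ∑ d ∈ (Ioc 0 N).filter (e ∣ ·), (1:ℝ)/(d:ℝ)^2
      ≤ ∑ e ∈ Ioc 0 N, (1:ℝ)/(e:ℝ)^2 * 2 := Finset.sum_le_sum h2
    _ = (∑ e ∈ Ioc 0 N, (1:ℝ)/(e:ℝ)^2) * 2 := by rw [Finset.sum_mul]
    _ ≤ 2 * 2 := by nlinarith [basel N]
    _ = 4 := by norm_num

lemma tau_div_nonneg (d : ℕ) : (0:ℝ) ≤ (tau d : ℝ)/(d:ℝ) := by positivity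

lemma dyadic (a b : ℕ) (hab : b ≤ 2*a + 2) :
    ∑ m ∈ Ioc a b, (1:ℝ) / ((m.totient : ℝ)) ≤ 8 := by
  have ha1 : (0:ℝ) < (a:ℝ) + 1 := by positivity
  have key : ∀ m ∈ Ioc a b, (1:ℝ)/(m.totient:ℝ)
      ≤ (1/((a:ℝ)+1)) * ∑ d ∈ m.divisors, (tau d : ℝ)/(d:ℝ) := by
    intro m hm
    rw [mem_Ioc] at hm
    have hm0 : 0 < m := by omega
    have hmr : (0:ℝ) < m := by exact_mod_cast hm0
    have hφ : (0:ℝ) < m.totient := by exact_mod_cast Nat.totient_pos.2 hm0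
    have hsum : (0:ℝ) ≤ ∑ d ∈ m.divisors, (tau d : ℝ)/(d:ℝ) :=
      Finset.sum_nonneg fun d _ => tau_div_nonneg d
    have e1 : (1:ℝ)/(m.totient:ℝ) = (1/(m:ℝ)) * ((m:ℝ)/(m.totient:ℝ)) := by
      field_simp
    have e2 : (m:ℝ)/(m.totient:ℝ) ≤ ∑ d ∈ m.divisors, (tau d : ℝ)/(d:ℝ) := by
      refine le_trans (ratio_le_sum hm0) (Finset.sum_le_sum fun d hd => ?_)
      exact inv_totient_le (Nat.pos_of_mem_divisors hd)
    have e3 : (1:ℝ)/(m:ℝ) ≤ 1/((a:ℝ)+1) := by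
      apply one_div_le_one_div_of_le ha1
      exact_mod_cast hm.1
    calc (1:ℝ)/(m.totient:ℝ) = (1/(m:ℝ)) * ((m:ℝ)/(m.totient:ℝ)) := e1
      _ ≤ (1/(m:ℝ)) * ∑ d ∈ m.divisors, (tau d : ℝ)/(d:ℝ) := by
          apply mul_le_mul_of_nonneg_left e2 (by positivity)
      _ ≤ (1/((a:ℝ)+1)) * ∑ d ∈ m.divisors, (tau d : ℝ)/(d:ℝ) :=
          mul_le_mul_of_nonneg_right e3 hsum
  have step2 : ∑ m ∈ Ioc a b, ∑ d ∈ m.divisors, (tau d : ℝ)/(d:ℝ)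
      ≤ ∑ m ∈ Ioc 0 b, ∑ d ∈ m.divisors, (tau d : ℝ)/(d:ℝ) := by
    apply Finset.sum_le_sum_of_subset_of_nonneg
    · exact Finset.Ioc_subset_Ioc (Nat.zero_le a) le_rfl
    · intro m _ _
      exact Finset.sum_nonneg fun d _ => tau_div_nonneg d
  have step3 : ∑ m ∈ Ioc 0 b, ∑ d ∈ m.divisors, (tau d : ℝ)/(d:ℝ) ≤ 4 * b := by
    rw [swap_div b (fun _ d => (tau d : ℝ)/(d:ℝ))]
    have : ∀ d ∈ Ioc 0 b, ∑ m ∈ (Ioc 0 b).filter (d ∣ ·), (tau d : ℝ)/(d:ℝ)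
        ≤ (b:ℝ) * ((tau d : ℝ)/(d:ℝ)^2) := by
      intro d hd
      rw [mem_Ioc] at hd
      rw [Finset.sum_const, Nat.Ioc_filter_dvd_card_eq_div, nsmul_eq_mul]
      have hc : ((b/d : ℕ):ℝ) ≤ (b:ℝ)/(d:ℝ) := by
        apply Nat.cast_div_le
      have hdr : (0:ℝ) < d := by exact_mod_cast hd.1
      calc ((b/d:ℕ):ℝ) * ((tau d:ℝ)/(d:ℝ))
          ≤ ((b:ℝ)/(d:ℝ)) * ((tau d:ℝ)/(d:ℝ)) :=
            mul_le_mul_of_nonneg_right hc (tau_div_nonneg d)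
        _ = (b:ℝ) * ((tau d : ℝ)/(d:ℝ)^2) := by rw [pow_two]; field_simp
    calc ∑ d ∈ Ioc 0 b, ∑ m ∈ (Ioc 0 b).filter (d ∣ ·), (tau d : ℝ)/(d:ℝ)
        ≤ ∑ d ∈ Ioc 0 b, (b:ℝ) * ((tau d : ℝ)/(d:ℝ)^2) := Finset.sum_le_sum this
      _ = (b:ℝ) * ∑ d ∈ Ioc 0 b, (tau d : ℝ)/(d:ℝ)^2 := by rw [Finset.mul_sum]
      _ ≤ (b:ℝ) * 4 := by
          have hb : (0:ℝ) ≤ b := by positivity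
          nlinarith [tau_sum_le b, Finset.sum_nonneg (s := Ioc 0 b)
            (f := fun d => (tau d : ℝ)/(d:ℝ)^2) (fun d _ => by positivity)]
      _ = 4 * b := by ring
  calc ∑ m ∈ Ioc a b, (1:ℝ)/(m.totient:ℝ)
      ≤ ∑ m ∈ Ioc a b, (1/((a:ℝ)+1)) * ∑ d ∈ m.divisors, (tau d : ℝ)/(d:ℝ) :=
        Finset.sum_le_sum key
    _ = (1/((a:ℝ)+1)) * ∑ m ∈ Ioc a b, ∑ d ∈ m.divisors, (tau d : ℝ)/(d:ℝ) := by
        rw [Finset.mul_sum]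
    _ ≤ (1/((a:ℝ)+1)) * (4 * b) := by
        apply mul_le_mul_of_nonneg_left (le_trans step2 step3) (by positivity)
    _ ≤ 8 := by
        rw [div_mul_eq_mul_div, one_mul, div_le_iff₀ ha1]
        have hbr : (b:ℝ) ≤ 2*(a:ℝ)+2 := by exact_mod_cast hab
        nlinarith

lemma div_bound {A B h : ℕ} (hAB : B ≤ 2*A+1) (hh : 0 < h) : B/h ≤ 2*(A/h) + 2 := by
  have h1 : B/h ≤ (2*A+1)/h := Nat.div_le_div_right hAB
  refine le_trans h1 ?_
  have h2 : (2*A+1)/h < 2*(A/h)+3 := by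
    rw [Nat.div_lt_iff_lt_mul hh]
    have expand : (2*(A/h)+3)*h = 2*(h*(A/h)) + 3*h := by ring
    rw [expand]
    have hdm := Nat.div_add_mod A h
    have hmod := Nat.mod_lt A hh
    omega
  omega

lemma sum_filter_le {A B h : ℕ} (hAB : B ≤ 2*A+1) (hh : 0 < h) (s : Finset ℕ)
    (hs : s ⊆ Ioc A B) (hdvd : ∀ q ∈ s, h ∣ q) :
    ∑ q ∈ s, (1:ℝ) / (((q/h).totient : ℝ)) ≤ 8 := by
  have hinj : ∀ q ∈ s, ∀ q' ∈ s, q/h = q'/h → q = q' := by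
    intro q hq q' hq' heq
    have e1 := Nat.div_mul_cancel (hdvd q hq)
    have e2 := Nat.div_mul_cancel (hdvd q' hq')
    rw [← e1, ← e2, heq]
  calc ∑ q ∈ s, (1:ℝ) / (((q/h).totient : ℝ))
      = ∑ m ∈ s.image (·/h), (1:ℝ) / ((m.totient : ℝ)) := by
        rw [Finset.sum_image hinj]
    _ ≤ ∑ m ∈ Ioc (A/h) (B/h), (1:ℝ) / ((m.totient : ℝ)) := by
        apply Finset.sum_le_sum_of_subset_of_nonneg
        · intro m hm
          rw [Finset.mem_image] at hm
          obtain ⟨q, hq, rfl⟩ := hm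
          have hq' := hs hq
          rw [mem_Ioc] at hq' ⊢
          exact ⟨Nat.div_lt_div_of_lt_of_dvd (hdvd q hq) hq'.1,
            Nat.div_le_div_right hq'.2⟩
        · intro m _ _; positivity
    _ ≤ 8 := dyadic _ _ (div_bound hAB hh)

lemma W_le {A B : ℕ} (hAB : B ≤ 2*A+1) {n : ℕ} (hn : 0 < n) :
    ∑ q ∈ Ioc A B, (1:ℝ)/(((q / Nat.gcd n q).totient : ℝ)) ≤ 8 * (tau n : ℝ) := by
  have hmaps : ∀ q ∈ Ioc A B, Nat.gcd n q ∈ n.divisors := fun q _ =>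
    Nat.mem_divisors.2 ⟨Nat.gcd_dvd_left n q, hn.ne'⟩
  rw [← Finset.sum_fiberwise_of_maps_to hmaps]
  have step : ∀ h ∈ n.divisors,
      ∑ q ∈ (Ioc A B).filter (fun q => Nat.gcd n q = h),
        (1:ℝ)/(((q / Nat.gcd n q).totient : ℝ)) ≤ 8 := by
    intro h hh
    have hh0 : 0 < h := Nat.pos_of_mem_divisors hh
    have rewr : ∀ q ∈ (Ioc A B).filter (fun q => Nat.gcd n q = h),
        (1:ℝ)/(((q / Nat.gcd n q).totient : ℝ)) = (1:ℝ)/(((q/h).totient : ℝ)) := by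
      intro q hq
      rw [Finset.mem_filter] at hq
      rw [hq.2]
    rw [Finset.sum_congr rfl rewr]
    apply sum_filter_le hAB hh0 _ (Finset.filter_subset _ _)
    intro q hq
    rw [Finset.mem_filter] at hq
    rw [← hq.2]
    exact Nat.gcd_dvd_right n q
  calc ∑ h ∈ n.divisors, ∑ q ∈ (Ioc A B).filter (fun q => Nat.gcd n q = h),
        (1:ℝ)/(((q / Nat.gcd n q).totient : ℝ))
      ≤ ∑ _h ∈ n.divisors, (8:ℝ) := Finset.sum_le_sum step
    _ = 8 * (tau n : ℝ) := by rw [Finset.sum_const, nsmul_eq_mul, tau]; ring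

/-- For any real `x, Q ≥ 1` and any real sequence `(a_n)_{n ≤ x}`,
`Σ_{Q/2 < q ≤ Q} Σ_{h ∣ q} (1/φ(q/h)) Σ_{n ≤ x, (n,q)=h} a_n² ≪ Σ_{n ≤ x} a_n² τ(n)`,
with an absolute implied constant. -/
theorem statement_9 :
    ∃ C : ℝ, 0 < C ∧ ∀ (x Q : ℝ) (a : ℕ → ℝ), 1 ≤ x → 1 ≤ Q →
      ∑ q ∈ Finset.Ioc ⌊Q / 2⌋₊ ⌊Q⌋₊, ∑ h ∈ q.divisors,
          (1 / (Nat.totient (q / h) : ℝ)) *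
            ∑ n ∈ (Finset.Icc 1 ⌊x⌋₊).filter (fun n => Nat.gcd n q = h), (a n) ^ 2
        ≤ C * ∑ n ∈ Finset.Icc 1 ⌊x⌋₊, (a n) ^ 2 * (tau n : ℝ) := by
  refine ⟨8, by norm_num, fun x Q a hx hQ => ?_⟩
  set A := ⌊Q / 2⌋₊ with hA
  set B := ⌊Q⌋₊ with hB
  set X := ⌊x⌋₊ with hX
  have hQ0 : (0:ℝ) ≤ Q := by linarith
  have hAB : B ≤ 2*A + 1 := by
    have h1 : (B : ℝ) ≤ Q := Nat.floor_le hQ0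
    have h2 : Q/2 < (A:ℝ) + 1 := Nat.lt_floor_add_one _
    have h3 : (B:ℝ) < ((2*A+2 : ℕ) : ℝ) := by push_cast; linarith
    have h4 : B < 2*A+2 := by exact_mod_cast h3
    omega
  have step1 : ∀ q ∈ Ioc A B,
      ∑ h ∈ q.divisors, (1 / (Nat.totient (q / h) : ℝ)) *
          ∑ n ∈ (Finset.Icc 1 X).filter (fun n => Nat.gcd n q = h), (a n) ^ 2
      = ∑ n ∈ Finset.Icc 1 X,
          (1 / (Nat.totient (q / Nat.gcd n q) : ℝ)) * (a n) ^ 2 := by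
    intro q hq
    rw [mem_Ioc] at hq
    have hq0 : 0 < q := by omega
    have hmaps : ∀ n ∈ Finset.Icc 1 X, Nat.gcd n q ∈ q.divisors := fun n _ =>
      Nat.mem_divisors.2 ⟨Nat.gcd_dvd_right n q, hq0.ne'⟩
    rw [← Finset.sum_fiberwise_of_maps_to hmaps
      (fun n => (1 / (Nat.totient (q / Nat.gcd n q) : ℝ)) * (a n) ^ 2)]
    refine Finset.sum_congr rfl fun h _ => ?_
    rw [Finset.mul_sum]
    refine Finset.sum_congr rfl fun n hn => ?_
    rw [Finset.mem_filter] at hn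
    rw [hn.2]
  rw [Finset.sum_congr rfl step1, Finset.sum_comm]
  have step2 : ∀ n ∈ Finset.Icc 1 X,
      ∑ q ∈ Ioc A B, (1 / (Nat.totient (q / Nat.gcd n q) : ℝ)) * (a n) ^ 2
      ≤ 8 * ((a n)^2 * (tau n : ℝ)) := by
    intro n hn
    rw [Finset.mem_Icc] at hn
    have hn0 : 0 < n := hn.1
    rw [← Finset.sum_mul]
    have hW := W_le hAB hn0
    have ha2 : (0:ℝ) ≤ (a n)^2 := sq_nonneg _
    calc (∑ q ∈ Ioc A B, (1 / (Nat.totient (q / Nat.gcd n q) : ℝ))) * (a n)^2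
        ≤ (8 * (tau n : ℝ)) * (a n)^2 := mul_le_mul_of_nonneg_right hW ha2
      _ = 8 * ((a n)^2 * (tau n : ℝ)) := by ring
  calc ∑ n ∈ Finset.Icc 1 X, ∑ q ∈ Ioc A B,
        (1 / (Nat.totient (q / Nat.gcd n q) : ℝ)) * (a n) ^ 2
      ≤ ∑ n ∈ Finset.Icc 1 X, 8 * ((a n)^2 * (tau n : ℝ)) := Finset.sum_le_sum step2
    _ = 8 * ∑ n ∈ Finset.Icc 1 X, (a n)^2 * (tau n : ℝ) := by rw [Finset.mul_sum]
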